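/- Let n ≥ 1. Let D be the closed unit ball of EuclideanSpace ℝ (Fin n), equipped with the equivalence relation in which x ≈ y if and only if x = y, or ‖x‖ = 1 and y = −x (antipodal identification on the boundary sphere only). Let ℝP^n be the quotient of the unit sphere of EuclideanSpace ℝ (Fin (n+1)) by the equivalence relation identifying x with −x. Then the quotient space D/≈ is homeomorphic to ℝP^n. -/

import Mathlib

/-!
Vertical projection `x ↦ (x, √(1 - ‖x‖²))` identifies the closed disk `Dⁿ` with the closed upper
hemisphere of `Sⁿ`, with inverse "forget the last coordinate". Every antipodal pair of `Sⁿ` meets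
the closed upper hemisphere, in a single point unless it lies on the equator, and the antipodal
pairs on the equator are exactly the antipodal pairs of `∂Dⁿ`. Hence the projection descends to a
bijection `Dⁿ/∼ → ℝPⁿ`. Its inverse sends `[y]` to the class of whichever of `±y` has nonnegative
height; on the equator both choices give the same class, so by the pasting lemma over the two
closed hemispheres the inverse is continuous.
-/

/-- Real projective space `ℝP^n`: the quotient of the unit sphere of
`EuclideanSpace ℝ (Fin (n+1))` by the antipodal identification `x ∼ -x`. -/
abbrev RP (n : ℕ) : Type :=
  Quot (fun x y : Metric.sphere (0 : EuclideanSpace ℝ (Fin (n + 1))) 1 =>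
    (x : EuclideanSpace ℝ (Fin (n + 1))) = -(y : EuclideanSpace ℝ (Fin (n + 1))))

/-- The closed unit disk of `EuclideanSpace ℝ (Fin n)` with antipodal points of
its boundary sphere identified. -/
abbrev DiskModBoundary (n : ℕ) : Type :=
  Quot (fun x y : Metric.closedBall (0 : EuclideanSpace ℝ (Fin n)) 1 =>
    ‖(x : EuclideanSpace ℝ (Fin n))‖ = 1 ∧
      (y : EuclideanSpace ℝ (Fin n)) = -(x : EuclideanSpace ℝ (Fin n)))

open Metric

namespace EuclideanSpace

variable {𝕜 : Type*} {n : ℕ}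

def snoc (x : EuclideanSpace 𝕜 (Fin n)) (t : 𝕜) : EuclideanSpace 𝕜 (Fin (n + 1)) :=
  WithLp.toLp 2 (Fin.snoc (α := fun _ => 𝕜) x.ofLp t)

def init (y : EuclideanSpace 𝕜 (Fin (n + 1))) : EuclideanSpace 𝕜 (Fin n) :=
  WithLp.toLp 2 (Fin.init y.ofLp)

@[simp]
theorem snoc_last (x : EuclideanSpace 𝕜 (Fin n)) (t : 𝕜) : snoc x t (Fin.last n) = t := by
  simp [snoc]

@[simp]
theorem init_snoc (x : EuclideanSpace 𝕜 (Fin n)) (t : 𝕜) : init (snoc x t) = x := by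
  simp [snoc, init]

@[simp]
theorem snoc_init_last (y : EuclideanSpace 𝕜 (Fin (n + 1))) :
    snoc (init y) (y (Fin.last n)) = y := by
  simp [snoc, init]

theorem snoc_neg [RCLike 𝕜] (x : EuclideanSpace 𝕜 (Fin n)) (t : 𝕜) :
    snoc (-x) (-t) = -snoc x t := by
  ext i
  refine Fin.lastCases ?_ (fun j => ?_) i <;> simp [snoc]

theorem init_neg [RCLike 𝕜] (y : EuclideanSpace 𝕜 (Fin (n + 1))) : init (-y) = -init y := by
  ext i
  simp [init, Fin.init]

theorem norm_snoc_sq [RCLike 𝕜] (x : EuclideanSpace 𝕜 (Fin n)) (t : 𝕜) :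
    ‖snoc x t‖ ^ 2 = ‖x‖ ^ 2 + ‖t‖ ^ 2 := by
  simp [norm_sq_eq, Fin.sum_univ_castSucc, snoc]

theorem norm_sq_eq_norm_init_sq_add [RCLike 𝕜] (y : EuclideanSpace 𝕜 (Fin (n + 1))) :
    ‖y‖ ^ 2 = ‖init y‖ ^ 2 + ‖y (Fin.last n)‖ ^ 2 := by
  rw [← norm_snoc_sq, snoc_init_last]

theorem continuous_snoc [RCLike 𝕜] :
    Continuous fun p : EuclideanSpace 𝕜 (Fin n) × 𝕜 => snoc p.1 p.2 := by
  unfold snoc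
  fun_prop

theorem continuous_init [RCLike 𝕜] :
    Continuous (init : EuclideanSpace 𝕜 (Fin (n + 1)) → EuclideanSpace 𝕜 (Fin n)) := by
  unfold init
  fun_prop

end EuclideanSpace

open EuclideanSpace

local notation "𝔻[" n "]" => closedBall (0 : EuclideanSpace ℝ (Fin n)) (1 : ℝ)
local notation "𝕊[" n "]" => sphere (0 : EuclideanSpace ℝ (Fin (n + 1))) (1 : ℝ)

variable {n : ℕ}

def height (y : 𝕊[n]) : ℝ :=
  (y : EuclideanSpace ℝ (Fin (n + 1))) (Fin.last n)

theorem height_neg (y : 𝕊[n]) : height (-y) = -height y :=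
  rfl

theorem continuous_height : Continuous (height : 𝕊[n] → ℝ) :=
  (continuous_apply _).comp ((PiLp.continuous_ofLp 2 _).comp continuous_subtype_val)

theorem norm_init_sq_add_height_sq (y : 𝕊[n]) :
    ‖init (y : EuclideanSpace ℝ (Fin (n + 1)))‖ ^ 2 + height y ^ 2 = 1 := by
  have h := norm_sq_eq_norm_init_sq_add (y : EuclideanSpace ℝ (Fin (n + 1)))
  rw [mem_sphere_zero_iff_norm.mp y.2, Real.norm_eq_abs, sq_abs] at h
  rw [height, ← h, one_pow]

noncomputable def diskToSphere (x : 𝔻[n]) : 𝕊[n] :=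
  ⟨snoc (x : EuclideanSpace ℝ (Fin n)) √(1 - ‖(x : EuclideanSpace ℝ (Fin n))‖ ^ 2), by
    have hx : ‖(x : EuclideanSpace ℝ (Fin n))‖ ^ 2 ≤ 1 :=
      (sq_le_one_iff₀ (norm_nonneg _)).mpr (mem_closedBall_zero_iff.mp x.2)
    rw [mem_sphere_zero_iff_norm, ← pow_eq_one_iff_of_nonneg (norm_nonneg _) two_ne_zero,
      norm_snoc_sq, Real.norm_eq_abs, sq_abs, Real.sq_sqrt (by linarith)]
    ring⟩

def sphereToDisk (y : 𝕊[n]) : 𝔻[n] :=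
  ⟨init (y : EuclideanSpace ℝ (Fin (n + 1))), by
    rw [mem_closedBall_zero_iff, ← sq_le_one_iff₀ (norm_nonneg _)]
    nlinarith [norm_init_sq_add_height_sq y]⟩

theorem continuous_diskToSphere : Continuous (diskToSphere : 𝔻[n] → 𝕊[n]) :=
  (continuous_snoc.comp (continuous_subtype_val.prodMk
    (continuous_const.sub (continuous_subtype_val.norm.pow 2)).sqrt)).subtype_mk _

theorem continuous_sphereToDisk : Continuous (sphereToDisk : 𝕊[n] → 𝔻[n]) :=
  (continuous_init.comp continuous_subtype_val).subtype_mk _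

theorem height_diskToSphere_nonneg (x : 𝔻[n]) : 0 ≤ height (diskToSphere x) := by
  simp [height, diskToSphere]

theorem sphereToDisk_diskToSphere (x : 𝔻[n]) : sphereToDisk (diskToSphere x) = x :=
  Subtype.ext (init_snoc _ _)

theorem diskToSphere_sphereToDisk {y : 𝕊[n]} (hy : 0 ≤ height y) :
    diskToSphere (sphereToDisk y) = y := by
  have h := norm_init_sq_add_height_sq y
  apply Subtype.ext
  change snoc (init _) √(1 - ‖init _‖ ^ 2) = _
  rw [show 1 - ‖init (y : EuclideanSpace ℝ (Fin (n + 1)))‖ ^ 2 = height y ^ 2 by linarith,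
    Real.sqrt_sq hy, height, snoc_init_last]

theorem sphereToDisk_neg (y : 𝕊[n]) : sphereToDisk (-y) = -sphereToDisk y :=
  Subtype.ext (init_neg _)

theorem diskToSphere_neg_of_norm_eq_one {x : 𝔻[n]} (hx : ‖(x : EuclideanSpace ℝ (Fin n))‖ = 1) :
    diskToSphere (-x) = -diskToSphere x :=
  Subtype.ext (by simp [diskToSphere, hx, ← snoc_neg])

theorem norm_sphereToDisk_of_height_eq_zero {y : 𝕊[n]} (hy : height y = 0) :
    ‖(sphereToDisk y : EuclideanSpace ℝ (Fin n))‖ = 1 := by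
  have h := norm_init_sq_add_height_sq y
  rw [hy] at h
  change ‖init _‖ = 1
  rw [← pow_eq_one_iff_of_nonneg (norm_nonneg _) two_ne_zero]
  linarith

namespace DiskModBoundary

noncomputable def toRP : DiskModBoundary n → RP n :=
  Quot.map diskToSphere fun x y ⟨hx, hy⟩ => by
    rw [show y = -x from Subtype.ext hy, diskToSphere_neg_of_norm_eq_one hx, coe_neg_sphere,
      neg_neg]

theorem continuous_toRP : Continuous (toRP : DiskModBoundary n → RP n) :=
  continuous_quot_map _ continuous_diskToSphere

theorem mk_sphereToDisk_neg {y : 𝕊[n]} (hy : height y = 0) :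
    (Quot.mk _ (sphereToDisk (-y)) : DiskModBoundary n) = Quot.mk _ (sphereToDisk y) :=
  (Quot.sound ⟨norm_sphereToDisk_of_height_eq_zero hy,
    congrArg Subtype.val (sphereToDisk_neg y)⟩).symm

end DiskModBoundary

noncomputable def foldToDisk (y : 𝕊[n]) : DiskModBoundary n :=
  if 0 ≤ height y then Quot.mk _ (sphereToDisk y) else Quot.mk _ (sphereToDisk (-y))

theorem foldToDisk_neg (y : 𝕊[n]) : foldToDisk (-y) = foldToDisk y := by
  unfold foldToDisk
  rw [height_neg, neg_neg]
  split_ifs with hneg hpos hpos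
  · exact DiskModBoundary.mk_sphereToDisk_neg (by linarith)
  · rfl
  · rfl
  · linarith

theorem continuous_foldToDisk : Continuous (foldToDisk : 𝕊[n] → DiskModBoundary n) :=
  Continuous.if_le (continuous_quot_mk.comp continuous_sphereToDisk)
    (continuous_quot_mk.comp (continuous_sphereToDisk.comp continuous_neg)) continuous_const
    continuous_height fun _ hy => (DiskModBoundary.mk_sphereToDisk_neg hy.symm).symm

namespace RP

noncomputable def toDiskModBoundary : RP n → DiskModBoundary n :=
  Quot.lift foldToDisk fun y z (h : (y : EuclideanSpace ℝ (Fin (n + 1))) = -z) => by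
    rw [← foldToDisk_neg z, show y = -z from Subtype.ext h]

theorem continuous_toDiskModBoundary :
    Continuous (toDiskModBoundary : RP n → DiskModBoundary n) :=
  continuous_quot_lift _ continuous_foldToDisk

theorem toDiskModBoundary_toRP (x : DiskModBoundary n) :
    toDiskModBoundary (DiskModBoundary.toRP x) = x := by
  induction x using Quot.ind with
  | mk x =>
    change foldToDisk (diskToSphere x) = _
    rw [foldToDisk, if_pos (height_diskToSphere_nonneg x), sphereToDisk_diskToSphere]

theorem toRP_toDiskModBoundary (y : RP n) : DiskModBoundary.toRP (toDiskModBoundary y) = y := by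
  induction y using Quot.ind with
  | mk y =>
    change DiskModBoundary.toRP (foldToDisk y) = _
    unfold foldToDisk
    split_ifs with hy
    · exact congrArg _ (diskToSphere_sphereToDisk hy)
    · have hy' : 0 ≤ height (-y) := by
        rw [height_neg]
        linarith
      change Quot.mk _ (diskToSphere (sphereToDisk (-y))) = _
      rw [diskToSphere_sphereToDisk hy']
      exact Quot.sound rfl

end RP

noncomputable def DiskModBoundary.homeomorphRP : DiskModBoundary n ≃ₜ RP n where
  toFun := toRP
  invFun := RP.toDiskModBoundary
  left_inv := RP.toDiskModBoundary_toRP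
  right_inv := RP.toRP_toDiskModBoundary
  continuous_toFun := continuous_toRP
  continuous_invFun := RP.continuous_toDiskModBoundary

theorem diskModBoundary_homeomorph_projectiveSpace_general (n : ℕ) :
    Nonempty (DiskModBoundary n ≃ₜ RP n) :=
  ⟨DiskModBoundary.homeomorphRP⟩

/-- The closed `n`-disk with antipodal boundary points identified is homeomorphic
to real projective `n`-space. -/
theorem diskModBoundary_homeomorph_projectiveSpace (n : ℕ) (hn : 1 ≤ n) :
    Nonempty (DiskModBoundary n ≃ₜ RP n) :=
  diskModBoundary_homeomorph_projectiveSpace_general n
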